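/- Let p : 𝔅 → G be an upper semicontinuous Banach bundle over a second countable locally compact Hausdorff space G such that Γ₀(G;𝔅) is separable, and let σ be a generalized Radon measure on 𝔅 with total variation |σ|, represented as σ(f) = ∫_G ε_x(f(x)) d|σ|(x) with ε_x ∈ B(x)*, ‖ε_x‖ ≤ 1; extend σ to Σ_c(G;𝔅) by the same integral formula. Suppose φ : G → ℝ is a Borel function for which there is a sequence (φ_n) of nonnegative functions in C_c(G) with φ_n(x) decreasing to φ(x) for every x ∈ G. Then ∫_G φ d|σ| = sup{ |σ(f)| : f ∈ Σ_c(G;𝔅) and ‖f(x)‖ ≤ φ(x) for all x ∈ G }. -/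

import Mathlib

open MeasureTheory Filter Topology Set

/-- An upper semicontinuous Banach bundle over a topological space `X`, with fibres
`Fib x` (each a complex Banach space), total space `(x : X) × Fib x` and bundle
projection `Sigma.fst`.  The axioms are (B1)–(B4) of the paper, together with the
standing assumption that the bundle has enough sections. -/
structure USCBanachBundle (X : Type) [TopologicalSpace X] (Fib : X → Type)
    [∀ x, NormedAddCommGroup (Fib x)] [∀ x, NormedSpace ℂ (Fib x)]
    [∀ x, CompleteSpace (Fib x)] : Type where
  /-- the topology on the total space `Σ x, Fib x` -/
  topTotal : TopologicalSpace ((x : X) × Fib x)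
  /-- the projection is continuous -/
  continuous_proj : @Continuous ((x : X) × Fib x) X topTotal inferInstance
    fun b => b.1
  /-- the projection is an open map -/
  isOpenMap_proj : @IsOpenMap ((x : X) × Fib x) X topTotal inferInstance
    fun b => b.1
  /-- (B1): the norm is upper semicontinuous on the total space -/
  isOpen_norm_lt : ∀ r : ℝ, @IsOpen ((x : X) × Fib x) topTotal { b | ‖b.2‖ < r }
  /-- (B2): addition is continuous on pairs lying in a common fibre -/
  continuous_add :
    @Continuous { q : ((x : X) × Fib x) × ((x : X) × Fib x) // q.1.1 = q.2.1 }
      ((x : X) × Fib x)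
      (@instTopologicalSpaceSubtype _ _
        (@instTopologicalSpaceProd _ _ topTotal topTotal))
      topTotal
      (fun q => ⟨q.1.1.1, q.1.1.2 + cast (congrArg Fib q.2.symm) q.1.2.2⟩)
  /-- (B3): scalar multiplication is continuous -/
  continuous_smul : ∀ c : ℂ,
    @Continuous ((x : X) × Fib x) ((x : X) × Fib x) topTotal topTotal
      fun b => ⟨b.1, c • b.2⟩
  /-- (B4): if `p (a i) → x` and `‖a i‖ → 0` then `a i → 0ₓ` (stated for filters,
  which is equivalent to the statement for nets) -/
  tendsto_zero : ∀ {ι : Type} (l : Filter ι) (a : ι → (x : X) × Fib x) (x : X),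
    Filter.Tendsto (fun i => (a i).1) l (nhds x) →
    Filter.Tendsto (fun i => ‖(a i).2‖) l (nhds (0 : ℝ)) →
    Filter.Tendsto a l (@nhds _ topTotal (⟨x, 0⟩ : (x : X) × Fib x))
  /-- the bundle has enough sections -/
  enough_sections : ∀ (x : X) (v : Fib x), ∃ f : ∀ y, Fib y,
    (@Continuous X ((x : X) × Fib x) inferInstance topTotal fun y => ⟨y, f y⟩) ∧
      f x = v

namespace USCBanachBundle

variable {X : Type} [TopologicalSpace X] {Fib : X → Type}
  [∀ x, NormedAddCommGroup (Fib x)] [∀ x, NormedSpace ℂ (Fib x)]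
  [∀ x, CompleteSpace (Fib x)]

/-- `f` is a continuous (global) section of the bundle `B`. -/
def IsContSection (B : USCBanachBundle X Fib) (f : ∀ x, Fib x) : Prop :=
  @Continuous X ((x : X) × Fib x) inferInstance B.topTotal fun x => ⟨x, f x⟩

/-- membership in `Γ_c(X;𝔅)`: continuous compactly supported sections. -/
def MemGammaC (B : USCBanachBundle X Fib) (f : ∀ x, Fib x) : Prop :=
  B.IsContSection f ∧ ∃ K : Set X, IsCompact K ∧ ∀ x ∉ K, f x = 0

/-- membership in `Γ₀(X;𝔅)`: continuous sections vanishing at infinity. -/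
def MemGammaZero (B : USCBanachBundle X Fib) (f : ∀ x, Fib x) : Prop :=
  B.IsContSection f ∧ ∀ ε : ℝ, 0 < ε → IsCompact { x | ε ≤ ‖f x‖ }

/-- The Banach space `Γ₀(X;𝔅)` is separable: there is a countable set of sections in
`Γ₀` which is dense for the supremum norm. -/
def SeparableGammaZero (B : USCBanachBundle X Fib) : Prop :=
  ∃ D : Set (∀ x, Fib x), D.Countable ∧ (∀ g ∈ D, B.MemGammaZero g) ∧
    ∀ f, B.MemGammaZero f → ∀ ε : ℝ, 0 < ε → ∃ g ∈ D, ∀ x, ‖f x - g x‖ < ε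

/-- uniform convergence of a sequence of sections to a section. -/
def UnifTendsto (B : USCBanachBundle X Fib) (F : ℕ → ∀ x, Fib x)
    (f : ∀ x, Fib x) : Prop :=
  ∀ ε : ℝ, 0 < ε → ∃ N : ℕ, ∀ n ≥ N, ∀ x, ‖F n x - f x‖ < ε

/-- continuity of `ν` in the inductive limit topology: `ν fₙ → ν f` whenever `fₙ → f`
uniformly with all supports contained in a fixed compact set. -/
def ILTContinuous (B : USCBanachBundle X Fib) (ν : (∀ x, Fib x) → ℂ) : Prop :=
  ∀ (F : ℕ → ∀ x, Fib x) (f : ∀ x, Fib x) (K : Set X),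
    (∀ n, B.MemGammaC (F n)) → B.MemGammaC f → IsCompact K →
    (∀ n, ∀ x ∉ K, F n x = 0) → B.UnifTendsto F f →
    Filter.Tendsto (fun n => ν (F n)) Filter.atTop (nhds (ν f))

/-- a generalized Radon measure on the bundle `B`: a linear functional on
`Γ_c(X;𝔅)` which is continuous in the inductive limit topology. -/
def IsGRM (B : USCBanachBundle X Fib) (ν : (∀ x, Fib x) → ℂ) : Prop :=
  (∀ f g, B.MemGammaC f → B.MemGammaC g →
    ν (fun x => f x + g x) = ν f + ν g) ∧
  (∀ (c : ℂ) (f), B.MemGammaC f → ν (fun x => c • f x) = c * ν f) ∧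
  B.ILTContinuous ν

/-- `μ` is the total variation `|ν|` of the generalized Radon measure `ν`: a Radon
measure (Borel measure, finite on compacts) such that for every nonnegative
`φ ∈ C_c(X)`, `∫ φ dμ = sup { |ν f| : f ∈ Γ_c(X;𝔅), ‖f x‖ ≤ φ x for all x }`. -/
def IsTotalVariation [MeasurableSpace X] (B : USCBanachBundle X Fib)
    (ν : (∀ x, Fib x) → ℂ) (μ : Measure X) : Prop :=
  (∀ K : Set X, IsCompact K → μ K < ⊤) ∧
  ∀ φ : X → ℝ, Continuous φ → HasCompactSupport φ → (∀ x, 0 ≤ φ x) →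
    ∫ x, φ x ∂μ =
      sSup { r : ℝ | ∃ f, B.MemGammaC f ∧ (∀ x, ‖f x‖ ≤ φ x) ∧ r = ‖ν f‖ }

/-- membership in `Σ_c(X;𝔅)`: bounded sections which are pointwise limits (in the
topology of the total space) of a uniformly bounded sequence in `Γ_c(X;𝔅)` whose
supports are contained in a fixed compact set. -/
def MemSigmaC (B : USCBanachBundle X Fib) (f : ∀ x, Fib x) : Prop :=
  (∃ M : ℝ, ∀ x, ‖f x‖ ≤ M) ∧
  ∃ (F : ℕ → ∀ x, Fib x) (K : Set X) (M : ℝ),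
    (∀ n, B.MemGammaC (F n)) ∧ (∀ n x, ‖F n x‖ ≤ M) ∧ IsCompact K ∧
    (∀ n, ∀ x ∉ K, F n x = 0) ∧
    ∀ x, Filter.Tendsto (fun n => (⟨x, F n x⟩ : (x : X) × Fib x)) Filter.atTop
      (@nhds _ B.topTotal (⟨x, f x⟩ : (x : X) × Fib x))

end USCBanachBundle

/-! The inequality `≤` is pointwise, since `‖ε x (f x)‖ ≤ ‖f x‖ ≤ φ x`. For `≥`, apply the
total variation formula to `φ₀ ≥ φ`: a section `g ∈ Γ_c` with `‖g‖ ≤ φ₀` is rescaled to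
`f = (φ / φ₀) • g`, which satisfies `‖f‖ ≤ φ` and `‖g - f‖ ≤ φ₀ - φ` and lies in `Σ_c` because
`φ / φ₀` is a pointwise limit of continuous cutoffs built from the `φₖ`. Hence
`∫ φ₀ ≤ sup + ∫ (φ₀ - φ)`. -/

theorem norm_ofReal_div_smul_le {E : Type*} [NormedAddCommGroup E] [NormedSpace ℂ E]
    {a b : ℝ} {v : E} (ha : 0 ≤ a) (hv : ‖v‖ ≤ b) : ‖((a / b : ℝ) : ℂ) • v‖ ≤ a := by
  rcases (norm_nonneg v).trans hv |>.eq_or_lt with hb | hb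
  · simpa [← hb] using ha
  · rw [norm_smul, Complex.norm_real, Real.norm_of_nonneg (by positivity)]
    calc a / b * ‖v‖ ≤ a / b * b := by gcongr
      _ = a := div_mul_cancel₀ a hb.ne'

theorem norm_sub_ofReal_div_smul_le {E : Type*} [NormedAddCommGroup E] [NormedSpace ℂ E]
    {a b : ℝ} {v : E} (ha : 0 ≤ a) (hab : a ≤ b) (hv : ‖v‖ ≤ b) :
    ‖v - ((a / b : ℝ) : ℂ) • v‖ ≤ b - a := by
  rcases ha.trans hab |>.eq_or_lt with hb | hb
  · have : v = 0 := norm_le_zero_iff.1 (hb ▸ hv)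
    simp [this, ← hb, le_antisymm (hb ▸ hab) ha]
  · have h1 : 0 ≤ 1 - a / b := sub_nonneg.2 ((div_le_one hb).2 hab)
    rw [← one_smul ℂ v, smul_smul, mul_one, ← sub_smul, ← Complex.ofReal_one,
      ← Complex.ofReal_sub, norm_smul, Complex.norm_real, Real.norm_of_nonneg h1]
    calc (1 - a / b) * ‖v‖ ≤ (1 - a / b) * b := by gcongr
      _ = b - a := by field_simp

theorem tendsto_min_one_div_add_inv {a : ℕ → ℝ} {l b : ℝ} (ha : Tendsto a atTop (𝓝 l))
    (hb : 0 < b) (hlb : l ≤ b) :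
    Tendsto (fun k : ℕ => min 1 (a k / (b + ((k : ℝ) + 1)⁻¹))) atTop (𝓝 (l / b)) := by
  have hden : Tendsto (fun k : ℕ => b + ((k : ℝ) + 1)⁻¹) atTop (𝓝 b) := by
    simpa [one_div] using tendsto_const_nhds.add (tendsto_one_div_add_atTop_nhds_zero_nat (𝕜 := ℝ))
  rw [← min_eq_right ((div_le_one hb).2 hlb)]
  exact tendsto_const_nhds.min (ha.div hden hb.ne')

theorem norm_integral_apply_le_integral {X : Type*} [MeasurableSpace X] {μ : Measure X}
    {E : X → Type*} [∀ x, NormedAddCommGroup (E x)] [∀ x, NormedSpace ℂ (E x)]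
    {ε : ∀ x, E x →L[ℂ] ℂ} (hε : ∀ x, ‖ε x‖ ≤ 1) {f : ∀ x, E x} {φ : X → ℝ}
    (hφ : Integrable φ μ) (hf : ∀ x, ‖f x‖ ≤ φ x) : ‖∫ x, ε x (f x) ∂μ‖ ≤ ∫ x, φ x ∂μ :=
  norm_integral_le_of_norm_le hφ
    (ae_of_all _ fun x => by simpa using (ε x).le_of_opNorm_le_of_le (hε x) (hf x))

namespace USCBanachBundle

variable {X : Type} [TopologicalSpace X] {Fib : X → Type}
  [∀ x, NormedAddCommGroup (Fib x)] [∀ x, NormedSpace ℂ (Fib x)]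
  [∀ x, CompleteSpace (Fib x)] {B : USCBanachBundle X Fib}

theorem tendsto_mk_add {ι : Type} {l : Filter ι} {z : ι → X} {u v : ∀ i, Fib (z i)} {x : X}
    {u₀ v₀ : Fib x}
    (hu : Tendsto (fun i => (⟨z i, u i⟩ : (x : X) × Fib x)) l (@nhds _ B.topTotal ⟨x, u₀⟩))
    (hv : Tendsto (fun i => (⟨z i, v i⟩ : (x : X) × Fib x)) l (@nhds _ B.topTotal ⟨x, v₀⟩)) :
    Tendsto (fun i => (⟨z i, u i + v i⟩ : (x : X) × Fib x)) l
      (@nhds _ B.topTotal ⟨x, u₀ + v₀⟩) := by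
  let _ : TopologicalSpace ((x : X) × Fib x) := B.topTotal
  have hpair : Tendsto
      (fun i => (⟨(⟨z i, u i⟩, ⟨z i, v i⟩), rfl⟩ :
        { q : ((x : X) × Fib x) × ((x : X) × Fib x) // q.1.1 = q.2.1 })) l
      (𝓝 ⟨(⟨x, u₀⟩, ⟨x, v₀⟩), rfl⟩) := by
    rw [tendsto_subtype_rng, nhds_prod_eq]
    exact hu.prodMk hv
  exact (B.continuous_add.tendsto _).comp hpair

theorem tendsto_mk_of_tendsto_norm_sub {ι : Type} {l : Filter ι} {x : X} {a : ι → Fib x}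
    {v : Fib x} (h : Tendsto (fun i => ‖a i - v‖) l (𝓝 0)) :
    Tendsto (fun i => (⟨x, a i⟩ : (x : X) × Fib x)) l (@nhds _ B.topTotal ⟨x, v⟩) := by
  let _ : TopologicalSpace ((x : X) × Fib x) := B.topTotal
  have hsub : Tendsto (fun i => (⟨x, a i - v⟩ : (x : X) × Fib x)) l (𝓝 ⟨x, 0⟩) :=
    B.tendsto_zero l _ x tendsto_const_nhds h
  simpa using tendsto_mk_add hsub (tendsto_const_nhds (x := (⟨x, v⟩ : (x : X) × Fib x)))

theorem IsContSection.smul {g : ∀ x, Fib x} (hg : B.IsContSection g) {c : X → ℂ}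
    (hc : Continuous c) : B.IsContSection fun x => c x • g x := by
  let _ : TopologicalSpace ((x : X) × Fib x) := B.topTotal
  rw [IsContSection, continuous_iff_continuousAt]
  intro x₀
  have hg₀ : Tendsto (fun x => (⟨x, g x⟩ : (x : X) × Fib x)) (𝓝 x₀) (𝓝 ⟨x₀, g x₀⟩) :=
    hg.tendsto x₀
  have hfixed : Tendsto (fun x => (⟨x, c x₀ • g x⟩ : (x : X) × Fib x)) (𝓝 x₀)
      (𝓝 ⟨x₀, c x₀ • g x₀⟩) :=
    ((B.continuous_smul (c x₀)).tendsto _).comp hg₀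
  -- (B1) keeps `‖g‖` locally bounded, so (B4) applies to the correction term.
  have hbdd : ∀ᶠ x in 𝓝 x₀, ‖g x‖ < ‖g x₀‖ + 1 :=
    hg₀.eventually ((B.isOpen_norm_lt _).mem_nhds (lt_add_one ‖g x₀‖))
  have hcorr : Tendsto (fun x => (⟨x, (c x - c x₀) • g x⟩ : (x : X) × Fib x)) (𝓝 x₀)
      (𝓝 ⟨x₀, 0⟩) := by
    refine B.tendsto_zero _ _ x₀ tendsto_id (squeeze_zero' (.of_forall fun _ => norm_nonneg _)
      ?_ (?_ : Tendsto (fun x => ‖c x - c x₀‖ * (‖g x₀‖ + 1)) (𝓝 x₀) (𝓝 0)))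
    · filter_upwards [hbdd] with x hx
      rw [norm_smul]
      gcongr
    · simpa using ((hc.tendsto x₀).sub_const (c x₀)).norm.mul_const (‖g x₀‖ + 1)
  simpa [ContinuousAt, ← add_smul] using tendsto_mk_add hfixed hcorr

theorem MemGammaC.smul {g : ∀ x, Fib x} (hg : B.MemGammaC g) {c : X → ℂ} (hc : Continuous c) :
    B.MemGammaC fun x => c x • g x := by
  obtain ⟨K, hK, hK0⟩ := hg.2
  exact ⟨hg.1.smul hc, K, hK, fun x hx => by simp [hK0 x hx]⟩

theorem memSigmaC_smul_of_tendsto {g : ∀ x, Fib x} (hg : B.MemGammaC g) {M : ℝ}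
    (hgM : ∀ x, ‖g x‖ ≤ M) {c : ℕ → X → ℂ} (hc : ∀ k, Continuous (c k)) {C : ℝ}
    (hcC : ∀ k x, ‖c k x‖ ≤ C) {d : X → ℂ}
    (hcd : ∀ x, g x ≠ 0 → Tendsto (fun k => c k x) atTop (𝓝 (d x))) :
    B.MemSigmaC fun x => d x • g x := by
  let _ : TopologicalSpace ((x : X) × Fib x) := B.topTotal
  obtain ⟨K, hK, hK0⟩ := hg.2
  have hC : ∀ x, 0 ≤ C := fun x => (norm_nonneg _).trans (hcC 0 x)
  refine ⟨⟨C * M, fun x => ?_⟩, fun k x => c k x • g x, K, C * M, fun k => hg.smul (hc k),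
    fun k x => ?_, hK, fun k x hx => by simp [hK0 x hx], fun x => ?_⟩
  · rcases eq_or_ne (g x) 0 with hx | hx
    · simpa [hx] using mul_nonneg (hC x) ((norm_nonneg _).trans (hgM x))
    · rw [norm_smul]
      exact mul_le_mul (le_of_tendsto' (hcd x hx).norm (hcC · x)) (hgM x) (norm_nonneg _) (hC x)
  · rw [norm_smul]
    exact mul_le_mul (hcC k x) (hgM x) (norm_nonneg _) (hC x)
  · rcases eq_or_ne (g x) 0 with hx | hx
    · simpa [hx] using tendsto_const_nhds
    · refine tendsto_mk_of_tendsto_norm_sub ?_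
      simp_rw [← sub_smul, norm_smul]
      simpa using ((hcd x hx).sub_const (d x)).norm.mul_const ‖g x‖

theorem memSigmaC_div_smul {g : ∀ x, Fib x} (hg : B.MemGammaC g) {ψ : X → ℝ}
    (hψ : Continuous ψ) (hψ_supp : HasCompactSupport ψ) (hgψ : ∀ x, ‖g x‖ ≤ ψ x) {φ : X → ℝ}
    (hφψ : ∀ x, φ x ≤ ψ x) {φseq : ℕ → X → ℝ} (hφseq_cont : ∀ n, Continuous (φseq n))
    (hφseq_nonneg : ∀ n x, 0 ≤ φseq n x)
    (hφseq_lim : ∀ x, Tendsto (fun n => φseq n x) atTop (𝓝 (φ x))) :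
    B.MemSigmaC fun x => ((φ x / ψ x : ℝ) : ℂ) • g x := by
  obtain ⟨M, hM⟩ := hψ.bounded_above_of_compact_support hψ_supp
  have hden : ∀ (k : ℕ) x, 0 < ψ x + ((k : ℝ) + 1)⁻¹ := fun k x =>
    add_pos_of_nonneg_of_pos ((norm_nonneg _).trans (hgψ x)) (by positivity)
  -- The cutoffs `min 1 (φₖ / (ψ + 1/(k+1)))` are continuous and tend to `φ / ψ` where `ψ > 0`.
  refine memSigmaC_smul_of_tendsto hg (fun x => (hgψ x).trans ((le_abs_self _).trans (hM x)))
    (c := fun k x => ((min 1 (φseq k x / (ψ x + ((k : ℝ) + 1)⁻¹)) : ℝ) : ℂ)) (C := 1)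
    (fun k => ?_) (fun k x => ?_) (fun x hx => ?_)
  · exact Complex.continuous_ofReal.comp (continuous_const.min
      ((hφseq_cont k).div (hψ.add continuous_const) fun x => (hden k x).ne'))
  · rw [Complex.norm_real, Real.norm_of_nonneg
      (le_min zero_le_one (div_nonneg (hφseq_nonneg k x) (hden k x).le))]
    exact min_le_left _ _
  · have hψx : 0 < ψ x := (norm_pos_iff.2 hx).trans_le (hgψ x)
    exact (Complex.continuous_ofReal.tendsto _).comp
      (tendsto_min_one_div_add_inv (hφseq_lim x) hψx (hφψ x))

section Integral

variable [MeasurableSpace X] {μ : Measure X}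

theorem IsTotalVariation.isFiniteMeasureOnCompacts {ν : (∀ x, Fib x) → ℂ}
    (h : B.IsTotalVariation ν μ) : IsFiniteMeasureOnCompacts μ :=
  ⟨h.1⟩

theorem exists_memSigmaC_norm_integral_le [OpensMeasurableSpace X] [IsFiniteMeasureOnCompacts μ]
    {ε : ∀ x, Fib x →L[ℂ] ℂ} (hε : ∀ x, ‖ε x‖ ≤ 1) {g : ∀ x, Fib x} (hg : B.MemGammaC g)
    (hεg : Measurable fun x => ε x (g x)) {ψ : X → ℝ} (hψ : Continuous ψ)
    (hψ_supp : HasCompactSupport ψ) (hgψ : ∀ x, ‖g x‖ ≤ ψ x) {φ : X → ℝ} (hφ : Measurable φ)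
    (hφ_nonneg : ∀ x, 0 ≤ φ x) (hφψ : ∀ x, φ x ≤ ψ x) {φseq : ℕ → X → ℝ}
    (hφseq_cont : ∀ n, Continuous (φseq n)) (hφseq_nonneg : ∀ n x, 0 ≤ φseq n x)
    (hφseq_lim : ∀ x, Tendsto (fun n => φseq n x) atTop (𝓝 (φ x))) :
    ∃ f, B.MemSigmaC f ∧ (∀ x, ‖f x‖ ≤ φ x) ∧
      ‖∫ x, ε x (g x) ∂μ‖ ≤ ‖∫ x, ε x (f x) ∂μ‖ + (∫ x, ψ x ∂μ - ∫ x, φ x ∂μ) := by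
  set f : ∀ x, Fib x := fun x => ((φ x / ψ x : ℝ) : ℂ) • g x
  have hεle : ∀ x {v : Fib x} {r : ℝ}, ‖v‖ ≤ r → ‖ε x v‖ ≤ r := fun x _ _ h => by
    simpa using (ε x).le_of_opNorm_le_of_le (hε x) h
  have hψ_int : Integrable ψ μ := hψ.integrable_of_hasCompactSupport hψ_supp
  have hφ_int : Integrable φ μ := hψ_int.mono' hφ.aestronglyMeasurable
    (ae_of_all _ fun x => by rw [Real.norm_of_nonneg (hφ_nonneg x)]; exact hφψ x)
  have hεg_int : Integrable (fun x => ε x (g x)) μ :=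
    hψ_int.mono' hεg.aestronglyMeasurable (ae_of_all _ fun x => hεle x (hgψ x))
  have hεf_int : Integrable (fun x => ε x (f x)) μ := by
    refine hφ_int.mono' ?_ (ae_of_all _ fun x => hεle x (norm_ofReal_div_smul_le
      (hφ_nonneg x) (hgψ x)))
    simp only [f, map_smul, smul_eq_mul]
    exact ((Complex.measurable_ofReal.comp (hφ.div hψ.measurable)).mul hεg).aestronglyMeasurable
  have hεgf : ∀ x, ‖ε x (g x) - ε x (f x)‖ ≤ ψ x - φ x := fun x => by
    rw [← map_sub]
    exact hεle x (norm_sub_ofReal_div_smul_le (hφ_nonneg x) (hφψ x) (hgψ x))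
  refine ⟨f, memSigmaC_div_smul hg hψ hψ_supp hgψ hφψ hφseq_cont hφseq_nonneg hφseq_lim,
    fun x => norm_ofReal_div_smul_le (hφ_nonneg x) (hgψ x), ?_⟩
  calc ‖∫ x, ε x (g x) ∂μ‖
      = ‖∫ x, ε x (f x) ∂μ + ∫ x, (ε x (g x) - ε x (f x)) ∂μ‖ := by
        rw [integral_sub hεg_int hεf_int, add_sub_cancel]
    _ ≤ ‖∫ x, ε x (f x) ∂μ‖ + ∫ x, (ψ x - φ x) ∂μ := by
        grw [norm_add_le, norm_integral_le_of_norm_le (hψ_int.sub hφ_int) (ae_of_all _ hεgf)]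
        rfl
    _ = ‖∫ x, ε x (f x) ∂μ‖ + (∫ x, ψ x ∂μ - ∫ x, φ x ∂μ) := by
        rw [integral_sub hψ_int hφ_int]

end Integral

end USCBanachBundle

theorem USCBanachBundle.totalVariation_integral_eq_sSup_sigma_c_general
    {G : Type} [TopologicalSpace G]
    [MeasurableSpace G] [BorelSpace G]
    {Fib : G → Type}
    [∀ x, NormedAddCommGroup (Fib x)] [∀ x, NormedSpace ℂ (Fib x)]
    [∀ x, CompleteSpace (Fib x)]
    (B : USCBanachBundle G Fib)
    (σ : (∀ x, Fib x) → ℂ)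
    (μσ : Measure G) (hμσ : B.IsTotalVariation σ μσ)
    (ε : (x : G) → (Fib x →L[ℂ] ℂ)) (hε : ∀ x, ‖ε x‖ ≤ 1)
    (hmeas : ∀ f, B.MemGammaC f → Measurable fun x => ε x (f x))
    (hrep : ∀ f, B.MemGammaC f → σ f = ∫ x, ε x (f x) ∂μσ)
    (φ : G → ℝ) (hφ_borel : Measurable φ)
    (φseq : ℕ → G → ℝ)
    (hφseq_cont : ∀ n, Continuous (φseq n))
    (hφseq_supp : ∀ n, HasCompactSupport (φseq n))
    (hφseq_nonneg : ∀ n x, 0 ≤ φseq n x)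
    (hφseq_anti : ∀ x, Antitone fun n => φseq n x)
    (hφseq_lim : ∀ x, Filter.Tendsto (fun n => φseq n x) Filter.atTop (nhds (φ x))) :
    ∫ x, φ x ∂μσ =
      sSup { r : ℝ | ∃ f, B.MemSigmaC f ∧ (∀ x, ‖f x‖ ≤ φ x) ∧
        r = ‖∫ x, ε x (f x) ∂μσ‖ } := by
  set S := { r : ℝ | ∃ f, B.MemSigmaC f ∧ (∀ x, ‖f x‖ ≤ φ x) ∧ r = ‖∫ x, ε x (f x) ∂μσ‖ }
  have := hμσ.isFiniteMeasureOnCompacts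
  have hφ_nonneg : ∀ x, 0 ≤ φ x := fun x => ge_of_tendsto' (hφseq_lim x) (hφseq_nonneg · x)
  have hφ_le : ∀ x, φ x ≤ φseq 0 x := fun x =>
    le_of_tendsto (hφseq_lim x) (.of_forall fun n => hφseq_anti x n.zero_le)
  have hφ₀_int : Integrable (φseq 0) μσ :=
    (hφseq_cont 0).integrable_of_hasCompactSupport (hφseq_supp 0)
  have hφ_int : Integrable φ μσ := hφ₀_int.mono' hφ_borel.aestronglyMeasurable
    (ae_of_all _ fun x => by rw [Real.norm_of_nonneg (hφ_nonneg x)]; exact hφ_le x)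
  have hS_le : ∀ r ∈ S, r ≤ ∫ x, φ x ∂μσ := by
    rintro _ ⟨f, -, hf, rfl⟩
    exact norm_integral_apply_le_integral hε hφ_int hf
  refine le_antisymm ?_ (Real.sSup_le hS_le (integral_nonneg hφ_nonneg))
  have hφ₀_le : ∫ x, φseq 0 x ∂μσ ≤ sSup S + (∫ x, φseq 0 x ∂μσ - ∫ x, φ x ∂μσ) := by
    refine (hμσ.2 _ (hφseq_cont 0) (hφseq_supp 0) (hφseq_nonneg 0)).trans_le
      (Real.sSup_le ?_ ?_)
    · rintro _ ⟨g, hg, hgφ₀, rfl⟩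
      obtain ⟨f, hf, hfφ, hgf⟩ := exists_memSigmaC_norm_integral_le (μ := μσ) hε hg (hmeas g hg)
        (hφseq_cont 0) (hφseq_supp 0) hgφ₀ hφ_borel hφ_nonneg hφ_le hφseq_cont hφseq_nonneg
        hφseq_lim
      rw [hrep g hg]
      exact hgf.trans (by gcongr; exact le_csSup ⟨_, hS_le⟩ ⟨f, hf, hfφ, rfl⟩)
    · exact add_nonneg (Real.sSup_nonneg (by rintro _ ⟨f, -, -, rfl⟩; exact norm_nonneg _))
        (sub_nonneg.2 (integral_mono hφ_int hφ₀_int hφ_le))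
  linarith

/-- Lemma 3.8 of the paper: with `σ` a generalized Radon measure with
total variation `|σ| = μσ`, represented as `σ f = ∫ ε_x (f x) d|σ|(x)` (`‖ε_x‖ ≤ 1`)
and extended to `Σ_c(G;𝔅)` by the same integral formula, if `φₙ ∈ C_c(G)⁺` decrease
pointwise to the Borel function `φ`, then
`∫ φ d|σ| = sup { |σ f| : f ∈ Σ_c(G;𝔅), ‖f x‖ ≤ φ x for all x }`. -/
theorem USCBanachBundle.totalVariation_integral_eq_sSup_sigma_c
    {G : Type} [TopologicalSpace G] [SecondCountableTopology G]
    [LocallyCompactSpace G] [T2Space G]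
    [MeasurableSpace G] [BorelSpace G]
    {Fib : G → Type}
    [∀ x, NormedAddCommGroup (Fib x)] [∀ x, NormedSpace ℂ (Fib x)]
    [∀ x, CompleteSpace (Fib x)]
    (B : USCBanachBundle G Fib)
    (hsep : B.SeparableGammaZero)
    (σ : (∀ x, Fib x) → ℂ) (hσ : B.IsGRM σ)
    (μσ : Measure G) (hμσ : B.IsTotalVariation σ μσ)
    (ε : (x : G) → (Fib x →L[ℂ] ℂ)) (hε : ∀ x, ‖ε x‖ ≤ 1)
    (hmeas : ∀ f, B.MemGammaC f → Measurable fun x => ε x (f x))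
    (hrep : ∀ f, B.MemGammaC f → σ f = ∫ x, ε x (f x) ∂μσ)
    (φ : G → ℝ) (hφ_borel : Measurable φ)
    (φseq : ℕ → G → ℝ)
    (hφseq_cont : ∀ n, Continuous (φseq n))
    (hφseq_supp : ∀ n, HasCompactSupport (φseq n))
    (hφseq_nonneg : ∀ n x, 0 ≤ φseq n x)
    (hφseq_anti : ∀ x, Antitone fun n => φseq n x)
    (hφseq_lim : ∀ x, Filter.Tendsto (fun n => φseq n x) Filter.atTop (nhds (φ x))) :
    ∫ x, φ x ∂μσ =
      sSup { r : ℝ | ∃ f, B.MemSigmaC f ∧ (∀ x, ‖f x‖ ≤ φ x) ∧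
        r = ‖∫ x, ε x (f x) ∂μσ‖ } :=
  USCBanachBundle.totalVariation_integral_eq_sSup_sigma_c_general B σ μσ hμσ ε hε hmeas hrep φ
    hφ_borel φseq hφseq_cont hφseq_supp hφseq_nonneg hφseq_anti hφseq_lim
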